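/- Let ρ_Y be a 3×3 qutrit density matrix whose only nonzero off-diagonal entries are a_{12} in position (1,2) and its conjugate in position (2,1). Then the trace-norm coherence C_tr(ρ_Y) = min over diagonal density matrices δ of ‖ρ_Y − δ‖_tr equals 2|a_{12}|, with the minimum achieved at the diagonal part of ρ_Y. -/

import Mathlib

open Matrix Complex ComplexOrder

noncomputable def matSqrt {n : Type*} [Fintype n] [DecidableEq n]
    (A : Matrix n n ℂ) : Matrix n n ℂ :=
  open Classical in
  if h : A.PosSemidef then
    h.1.eigenvectorUnitary.1 * diagonal (((↑) : ℝ → ℂ) ∘ (√·) ∘ h.1.eigenvalues) *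
      (star h.1.eigenvectorUnitary : Matrix n n ℂ) else 0

noncomputable def fid {n : Type*} [Fintype n] [DecidableEq n]
    (ρ δ : Matrix n n ℂ) : ℝ :=
  ((matSqrt (matSqrt ρ * δ * matSqrt ρ)).trace).re ^ 2

noncomputable def traceNorm {n : Type*} [Fintype n] [DecidableEq n]
    (A : Matrix n n ℂ) : ℝ :=
  ((matSqrt (Aᴴ * A)).trace).re

def IsDensity {n : Type*} [Fintype n] [DecidableEq n] (ρ : Matrix n n ℂ) : Prop :=
  ρ.PosSemidef ∧ ρ.trace = 1

noncomputable def qubit (rx ry rz : ℝ) : Matrix (Fin 2) (Fin 2) ℂ :=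
  (1/2 : ℂ) • !![(1:ℂ) + rz, (rx : ℂ) - ry * I; (rx : ℂ) + ry * I, (1:ℂ) - rz]

/- ## Auxiliary lemmas -/

lemma exists_abs' {n : Type*} [Fintype n] [DecidableEq n] {M : Matrix n n ℂ} (hM : M.IsHermitian) :
    ∃ S : Matrix n n ℂ, S.PosSemidef ∧ S ^ 2 = Mᴴ * M ∧ (S - M).PosSemidef ∧ (S + M).PosSemidef := by
  set U : Matrix n n ℂ := (hM.eigenvectorUnitary : Matrix n n ℂ) with hUdef
  set μ := hM.eigenvalues with hμdef
  have hU1 : star U * U = 1 := Unitary.coe_star_mul_self hM.eigenvectorUnitary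
  have hU1' : ∀ X : Matrix n n ℂ, star U * (U * X) = X := by
    intro X; rw [← Matrix.mul_assoc, hU1, Matrix.one_mul]
  have hspec : M = U * diagonal (fun i => ((μ i : ℝ) : ℂ)) * star U := hM.spectral_theorem
  have hdiagpsd : ∀ (d : n → ℝ), (∀ i, 0 ≤ d i) →
      (U * diagonal (fun i => ((d i : ℝ) : ℂ)) * star U).PosSemidef := by
    intro d hd
    have h1 : (diagonal (fun i => ((d i : ℝ) : ℂ))).PosSemidef :=
      PosSemidef.diagonal fun i => Complex.zero_le_real.mpr (hd i)
    simpa [star_eq_conjTranspose] using h1.mul_mul_conjTranspose_same U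
  have hmul : ∀ (d e : n → ℝ),
      (U * diagonal (fun i => ((d i : ℝ) : ℂ)) * star U) *
      (U * diagonal (fun i => ((e i : ℝ) : ℂ)) * star U) =
      U * diagonal (fun i => ((d i * e i : ℝ) : ℂ)) * star U := by
    intro d e
    simp only [Matrix.mul_assoc]
    rw [hU1', ← Matrix.mul_assoc (diagonal _), diagonal_mul_diagonal]
    congr 2
    ext i
    push_cast
    ring
  refine ⟨U * diagonal (fun i => ((|μ i| : ℝ) : ℂ)) * star U,
    hdiagpsd _ fun i => abs_nonneg _, ?_, ?_, ?_⟩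
  · have hf : (fun i => ((|μ i| * |μ i| : ℝ) : ℂ)) = (fun i => ((μ i * μ i : ℝ) : ℂ)) := by
      funext i; rw [abs_mul_abs_self]
    rw [hM.eq, pow_two, hmul, hf, hspec, hmul]
  · have h : U * diagonal (fun i => ((|μ i| : ℝ) : ℂ)) * star U - M =
        U * diagonal (fun i => ((|μ i| - μ i : ℝ) : ℂ)) * star U := by
      rw [hspec, ← Matrix.sub_mul, ← Matrix.mul_sub, diagonal_sub]
      congr 2
      ext i
      push_cast
      ring
    rw [h]
    exact hdiagpsd _ fun i => by simp [sub_nonneg, le_abs_self]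
  · have h : U * diagonal (fun i => ((|μ i| : ℝ) : ℂ)) * star U + M =
        U * diagonal (fun i => ((|μ i| + μ i : ℝ) : ℂ)) * star U := by
      rw [hspec, ← Matrix.add_mul, ← Matrix.mul_add, diagonal_add]
      congr 2
      ext i
      push_cast
      ring
    rw [h]
    exact hdiagpsd _ fun i => by linarith [neg_abs_le (μ i)]

open scoped MatrixOrder in
lemma matSqrt_eq' {n : Type*} [Fintype n] [DecidableEq n] {Q S : Matrix n n ℂ}
    (hS : S.PosSemidef) (h : S ^ 2 = Q) : matSqrt Q = S := by
  have hQ : Q.PosSemidef := h ▸ hS.pow 2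
  rw [matSqrt, dif_pos hQ]
  have key : CFC.sqrt Q = S := CFC.sqrt_unique (by rw [← h, sq]) hS.nonneg
  rw [← key, CFC.sqrt_eq_cfc, cfc_nnreal_eq_real _ Q, hQ.1.cfc_eq, IsHermitian.cfc,
    Unitary.conjStarAlgAut_apply]
  congr 2
  congr 1
  funext i
  simp [Real.coe_sqrt, Real.coe_toNNReal', max_eq_left (hQ.eigenvalues_nonneg i)]

lemma key_identity' (S M : Matrix (Fin 3) (Fin 3) ℂ) (a12 c : ℂ)
    (h01 : M 0 1 = a12) (h10 : M 1 0 = (starRingEnd ℂ) a12)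
    (hcc : (starRingEnd ℂ) c * c = 1)
    (hca : (starRingEnd ℂ) c * a12 = ‖a12‖)
    (hac : c * (starRingEnd ℂ) a12 = ‖a12‖) :
    (2:ℂ) * S.trace - 4 * ‖a12‖ =
      star (![c, 1, 0]) ⬝ᵥ ((S - M) *ᵥ ![c, 1, 0]) +
      star (![-c, 1, 0]) ⬝ᵥ ((S + M) *ᵥ ![-c, 1, 0]) +
      2 * (star (![0, 0, 1] : Fin 3 → ℂ) ⬝ᵥ (S *ᵥ ![0, 0, 1])) := by
  simp only [Matrix.trace, Matrix.diag, dotProduct, mulVec, Matrix.sub_apply, Matrix.add_apply,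
    Fin.sum_univ_three, Pi.star_apply, Matrix.cons_val_zero, Matrix.cons_val_one, Matrix.head_cons,
    Matrix.cons_val_two, Matrix.tail_cons, star_one, star_zero, star_neg, h01, h10,
    RCLike.star_def, map_neg, _root_.map_one, _root_.map_zero]
  linear_combination (-2 * S 0 0) * hcc + 2 * hca + 2 * hac

lemma traceNorm_lower' (M : Matrix (Fin 3) (Fin 3) ℂ) (hM : M.IsHermitian) (a12 : ℂ)
    (h01 : M 0 1 = a12) (h10 : M 1 0 = (starRingEnd ℂ) a12) :
    2 * ‖a12‖ ≤ traceNorm M := by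
  obtain ⟨S, hS, hsq, hSm, hSp⟩ := exists_abs' hM
  rw [traceNorm, matSqrt_eq' hS hsq]
  set c : ℂ := if a12 = 0 then 1 else a12 / ‖a12‖ with hc
  have habs : ∀ z : ℂ, z ≠ 0 → (starRingEnd ℂ) (z / ‖z‖) * z = ‖z‖ := by
    intro z hz
    have hA : (‖z‖ : ℂ) ≠ 0 := by simpa using norm_ne_zero_iff.mpr hz
    field_simp [map_div₀, Complex.conj_ofReal]
    rw [map_div₀, Complex.conj_ofReal, ← mul_div_assoc, Complex.mul_conj,
      Complex.normSq_eq_norm_sq]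
    push_cast
    rw [sq, mul_div_assoc, div_self hA, mul_one]
  have hca : (starRingEnd ℂ) c * a12 = ‖a12‖ := by
    by_cases h0 : a12 = 0
    · simp [hc, h0]
    · rw [hc, if_neg h0]; exact habs a12 h0
  have hcc : (starRingEnd ℂ) c * c = 1 := by
    by_cases h0 : a12 = 0
    · simp [hc, h0]
    · have hA : (‖a12‖ : ℂ) ≠ 0 := by simpa using norm_ne_zero_iff.mpr h0
      rw [hc, if_neg h0]
      field_simp [map_div₀, Complex.conj_ofReal]
      rw [map_div₀, Complex.conj_ofReal, ← mul_div_assoc, Complex.mul_conj,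
      Complex.normSq_eq_norm_sq]
      push_cast
      rw [sq, mul_div_assoc, div_self hA, mul_one]
  have hac : c * (starRingEnd ℂ) a12 = ‖a12‖ := by
    have := congrArg (starRingEnd ℂ) hca
    simpa [mul_comm, Complex.conj_ofReal] using this
  have hid := key_identity' S M a12 c h01 h10 hcc hca hac
  have r1 : 0 ≤ (star (![c, 1, 0]) ⬝ᵥ ((S - M) *ᵥ ![c, 1, 0])).re := by
    simpa only [Complex.zero_re] using (Complex.le_def.mp (hSm.dotProduct_mulVec_nonneg ![c, 1, 0])).1
  have r2 : 0 ≤ (star (![-c, 1, 0]) ⬝ᵥ ((S + M) *ᵥ ![-c, 1, 0])).re := by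
    simpa only [Complex.zero_re] using (Complex.le_def.mp (hSp.dotProduct_mulVec_nonneg ![-c, 1, 0])).1
  have r3 : 0 ≤ (star (![0, 0, 1] : Fin 3 → ℂ) ⬝ᵥ (S *ᵥ ![0, 0, 1])).re := by
    simpa only [Complex.zero_re] using (Complex.le_def.mp (hS.dotProduct_mulVec_nonneg ![0, 0, 1])).1
  have hre := congrArg Complex.re hid
  simp only [Complex.sub_re, Complex.add_re, Complex.mul_re, Complex.ofReal_re, Complex.ofReal_im,
    Complex.re_ofNat, Complex.im_ofNat, mul_zero, zero_mul, sub_zero, zero_sub, neg_zero] at hre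
  linarith

/-- For the qutrit state ρ_Y (only off-diagonal entries at (1,2) and (2,1)),
the trace-norm coherence equals 2|a₁₂|, achieved at the diagonal part. -/
theorem traceNorm_coherence_qutrit_Y (a11 a22 a33 : ℝ) (a12 : ℂ)
    (hρ : IsDensity !![(a11 : ℂ), a12, 0; starRingEnd ℂ a12, (a22 : ℂ), 0; 0, 0, (a33 : ℂ)]) :
    IsLeast {t : ℝ | ∃ δ : Matrix (Fin 3) (Fin 3) ℂ, IsDensity δ ∧ δ.IsDiag ∧
        t = traceNorm (!![(a11 : ℂ), a12, 0; starRingEnd ℂ a12, (a22 : ℂ), 0;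
            0, 0, (a33 : ℂ)] - δ)}
      (2 * ‖a12‖) ∧
    traceNorm (!![(a11 : ℂ), a12, 0; starRingEnd ℂ a12, (a22 : ℂ), 0; 0, 0, (a33 : ℂ)] -
        !![(a11 : ℂ), 0, 0; 0, (a22 : ℂ), 0; 0, 0, (a33 : ℂ)]) = 2 * ‖a12‖ := by
  set R : Matrix (Fin 3) (Fin 3) ℂ :=
    !![(a11 : ℂ), a12, 0; starRingEnd ℂ a12, (a22 : ℂ), 0; 0, 0, (a33 : ℂ)] with hR
  set D : Matrix (Fin 3) (Fin 3) ℂ :=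
    !![(a11 : ℂ), 0, 0; 0, (a22 : ℂ), 0; 0, 0, (a33 : ℂ)] with hD
  have hRherm : R.IsHermitian := hρ.1.1
  -- the equality part
  have hNmat : R - D = !![0, a12, 0; starRingEnd ℂ a12, 0, 0; 0, 0, 0] := by
    rw [hR, hD]
    ext i j
    fin_cases i <;> fin_cases j <;> simp [Matrix.vecHead, Matrix.vecTail]
  have hconjmul : (starRingEnd ℂ) a12 * a12 = (‖a12‖ : ℂ) * (‖a12‖ : ℂ) := by
    rw [mul_comm, Complex.mul_conj, Complex.normSq_eq_norm_sq]
    push_cast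
    ring
  have hconjmul' : a12 * (starRingEnd ℂ) a12 = (‖a12‖ : ℂ) * (‖a12‖ : ℂ) := by
    rw [mul_comm]; exact hconjmul
  set T : Matrix (Fin 3) (Fin 3) ℂ :=
    diagonal ![(‖a12‖ : ℂ), (‖a12‖ : ℂ), 0] with hT
  have hTpsd : T.PosSemidef := by
    apply PosSemidef.diagonal
    intro i
    fin_cases i <;> simp [Complex.zero_le_real, norm_nonneg]
  have hTsq : T ^ 2 = (R - D)ᴴ * (R - D) := by
    rw [hNmat, pow_two, hT]
    ext i j
    fin_cases i <;> fin_cases j <;>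
      simp [Matrix.mul_apply, Fin.sum_univ_three, Matrix.conjTranspose_apply, diagonal,
        Matrix.vecHead, Matrix.vecTail, hconjmul, hconjmul']
  have heq : traceNorm (R - D) = 2 * ‖a12‖ := by
    rw [traceNorm, matSqrt_eq' hTpsd hTsq, hT]
    simp [Matrix.trace, Matrix.diag, Fin.sum_univ_three, diagonal]
    ring
  refine ⟨⟨?_, ?_⟩, heq⟩
  · -- membership: D is a diagonal density
    refine ⟨D, ⟨?_, ?_⟩, ?_, heq.symm⟩
    · -- D PosSemidef
      have hDdiag : D = diagonal ![(a11 : ℂ), (a22 : ℂ), (a33 : ℂ)] := by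
        rw [hD]; ext i j; fin_cases i <;> fin_cases j <;> simp [diagonal, Matrix.vecHead, Matrix.vecTail]
      have h1 : (0:ℂ) ≤ (a11 : ℂ) := by
        have := hρ.1.dotProduct_mulVec_nonneg ![1, 0, 0]
        simpa [hR, dotProduct, mulVec, Fin.sum_univ_three] using this
      have h2 : (0:ℂ) ≤ (a22 : ℂ) := by
        have := hρ.1.dotProduct_mulVec_nonneg ![0, 1, 0]
        simpa [hR, dotProduct, mulVec, Fin.sum_univ_three] using this
      have h3 : (0:ℂ) ≤ (a33 : ℂ) := by
        have := hρ.1.dotProduct_mulVec_nonneg ![0, 0, 1]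
        simpa [hR, dotProduct, mulVec, Fin.sum_univ_three] using this
      rw [hDdiag]
      apply PosSemidef.diagonal
      intro i
      fin_cases i <;> assumption
    · -- trace D = 1
      have := hρ.2
      rw [hR] at this
      rw [hD]
      simp only [Matrix.trace, Matrix.diag, Fin.sum_univ_three] at this ⊢
      simpa using this
    · -- D diagonal
      intro i j hij
      fin_cases i <;> fin_cases j <;>
        first
          | exact absurd rfl hij
          | (rw [hD]; simp [Matrix.vecHead, Matrix.vecTail])
  · -- lower bound
    rintro t ⟨δ, hδ, hδdiag, rfl⟩
    have hM : (R - δ).IsHermitian := hRherm.sub hδ.1.1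
    have h01 : (R - δ) 0 1 = a12 := by
      have : δ 0 1 = 0 := hδdiag (by decide)
      simp [hR, Matrix.sub_apply, this]
    have h10 : (R - δ) 1 0 = (starRingEnd ℂ) a12 := by
      have : δ 1 0 = 0 := hδdiag (by decide)
      simp [hR, Matrix.sub_apply, this]
    exact traceNorm_lower' _ hM a12 h01 h10
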